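/- (Theorem 2.1.) Let (X, M, μ) and (Ω, B, P) be probability spaces, let ξ : X × Ω → ℝ be jointly measurable with spatial average ξ[X](ω) = ∫_X ξ(x, ω) μ(dx). Define Q(t) = sup_{x∈X} P(|ξ(x)| ≥ t) for t ≥ 0, g₀(p) = (p ∫₀^∞ t^{p−1} Q(t) dt)^{1/p}, and g(p) = p ln g₀(p). Suppose there exists b ∈ (1, ∞] such that g₀(p) < ∞ for all p ∈ (1, b). Then for all t ≥ e: P(|ξ[X]| ≥ t) ≤ exp(−g*(ln t)), where g*(u) = sup_{p∈(1,b)} (p u − g(p)). -/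

import Mathlib

/-!
For each admissible exponent `p`, Markov's inequality, Jensen's inequality
`|∫ ξ(x) dμ|^p ≤ ∫ |ξ(x)|^p dμ` and Tonelli give `t^p P(|ξ[X]| ≥ t) ≤ sup_x E|ξ(x)|^p`, and the
layer-cake formula bounds each `E|ξ(x)|^p` by `p ∫ t^{p-1} Q(t) dt = g₀(p)^p`. Hence
`P(|ξ[X]| ≥ t) ≤ exp(-(p ln t - g(p)))` for every such `p`, and taking the infimum over `p` turns
the exponent into `-g*(ln t)`.
-/

open MeasureTheory Real ENNReal

section Moments

variable {α : Type*} [MeasurableSpace α] {μ : Measure α}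

theorem rpow_mul_meas_le_enorm_le_lintegral {E : Type*} [TopologicalSpace E] [ContinuousENorm E]
    {f : α → E} (hf : AEStronglyMeasurable f μ) {p : ℝ} (hp : 0 ≤ p) (ε : ℝ≥0∞) :
    ε ^ p * μ {x | ε ≤ ‖f x‖ₑ} ≤ ∫⁻ x, ‖f x‖ₑ ^ p ∂μ :=
  calc ε ^ p * μ {x | ε ≤ ‖f x‖ₑ}
      ≤ ε ^ p * μ {x | ε ^ p ≤ ‖f x‖ₑ ^ p} := by
        gcongr _ * ?_
        exact measure_mono fun x hx => ENNReal.rpow_le_rpow hx hp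
    _ ≤ ∫⁻ x, ‖f x‖ₑ ^ p ∂μ := mul_meas_ge_le_lintegral₀ (hf.enorm.pow_const p) _

theorem enorm_integral_rpow_le_lintegral [IsProbabilityMeasure μ] {G : Type*}
    [NormedAddCommGroup G] [NormedSpace ℝ G] {f : α → G} (hf : AEStronglyMeasurable f μ)
    {p : ℝ} (hp : 1 ≤ p) :
    ‖∫ x, f x ∂μ‖ₑ ^ p ≤ ∫⁻ x, ‖f x‖ₑ ^ p ∂μ := by
  have hp0 : 0 < p := zero_lt_one.trans_le hp
  have hnorm : ‖∫ x, f x ∂μ‖ₑ ≤ eLpNorm' f p μ :=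
    calc ‖∫ x, f x ∂μ‖ₑ ≤ ∫⁻ x, ‖f x‖ₑ ∂μ := enorm_integral_le_lintegral_enorm f
      _ = eLpNorm' f 1 μ := by simp [eLpNorm'_eq_lintegral_enorm]
      _ ≤ eLpNorm' f p μ := eLpNorm'_le_eLpNorm'_of_exponent_le one_pos hp μ hf
  calc ‖∫ x, f x ∂μ‖ₑ ^ p ≤ eLpNorm' f p μ ^ p := by gcongr
    _ = ∫⁻ x, ‖f x‖ₑ ^ p ∂μ := by
      rw [eLpNorm'_eq_lintegral_enorm, ← ENNReal.rpow_mul, one_div_mul_cancel hp0.ne',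
        ENNReal.rpow_one]

theorem lintegral_enorm_rpow_le_of_meas_le {f : α → ℝ} (hf : AEMeasurable f μ) {p : ℝ}
    (hp : 0 < p) {Q : ℝ → ℝ≥0∞} (hQ : ∀ t, μ {x | t ≤ |f x|} ≤ Q t) :
    ∫⁻ x, ‖f x‖ₑ ^ p ∂μ ≤
      ENNReal.ofReal p * ∫⁻ t in Set.Ioi 0, ENNReal.ofReal (t ^ (p - 1)) * Q t := by
  have hlayer := lintegral_rpow_eq_lintegral_meas_le_mul μ (ae_of_all _ fun x => abs_nonneg (f x))
    hf.abs hp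
  simp_rw [← ENNReal.ofReal_rpow_of_nonneg (abs_nonneg _) hp.le, ← Real.enorm_eq_ofReal_abs]
    at hlayer
  simp_rw [hlayer, mul_comm (ENNReal.ofReal (_ ^ (p - 1)))]
  gcongr with t
  exact hQ t

end Moments

theorem lintegral_enorm_integral_rpow_le {X Ω : Type*} [MeasurableSpace X] [MeasurableSpace Ω]
    {μ : Measure X} [IsProbabilityMeasure μ] {P : Measure Ω} [SFinite P] {ξ : X → Ω → ℝ}
    (hξ : Measurable (Function.uncurry ξ)) {p : ℝ} (hp : 1 ≤ p) :
    ∫⁻ ω, ‖∫ x, ξ x ω ∂μ‖ₑ ^ p ∂P ≤ ∫⁻ x, ∫⁻ ω, ‖ξ x ω‖ₑ ^ p ∂P ∂μ :=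
  calc ∫⁻ ω, ‖∫ x, ξ x ω ∂μ‖ₑ ^ p ∂P
      ≤ ∫⁻ ω, ∫⁻ x, ‖ξ x ω‖ₑ ^ p ∂μ ∂P := lintegral_mono fun _ =>
        enorm_integral_rpow_le_lintegral (hξ.comp measurable_prodMk_right).aestronglyMeasurable hp
    _ = ∫⁻ x, ∫⁻ ω, ‖ξ x ω‖ₑ ^ p ∂P ∂μ :=
        (lintegral_lintegral_swap (hξ.enorm.pow_const p).aemeasurable).symm

theorem le_ofReal_exp_neg_of_rpow_mul_le {a c : ℝ≥0∞} (hc : c ≠ ⊤) {t p : ℝ} (ht : 0 < t)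
    (hp : 0 < p) (h : ENNReal.ofReal t ^ p * a ≤ c ^ p) :
    a ≤ ENNReal.ofReal (exp (-(p * log t - p * log c.toReal))) := by
  have hc_le : c ^ p ≤ ENNReal.ofReal (exp (p * log c.toReal)) := by
    rcases eq_or_ne c 0 with rfl | hc0
    · simp [ENNReal.zero_rpow_of_pos hp]
    · rw [← ENNReal.ofReal_toReal hc, ENNReal.ofReal_rpow_of_nonneg toReal_nonneg hp.le,
        ENNReal.toReal_ofReal toReal_nonneg,
        rpow_def_of_pos (ENNReal.toReal_pos hc0 hc), mul_comm]
  have htp : exp (p * log t) = t ^ p := by rw [rpow_def_of_pos ht, mul_comm]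
  rw [neg_sub, sub_eq_add_neg, exp_add, exp_neg, ← div_eq_mul_inv, htp,
    ENNReal.ofReal_div_of_pos (rpow_pos_of_pos ht p), ENNReal.le_div_iff_mul_le
      (Or.inl (by simpa using rpow_pos_of_pos ht p)) (Or.inl ofReal_ne_top),
    ← ENNReal.ofReal_rpow_of_nonneg ht.le hp.le, mul_comm]
  exact h.trans hc_le

theorem le_ofReal_exp_neg_sSup {a : ℝ≥0∞} (ha : a ≤ 1) {S : Set ℝ}
    (h : ∀ y ∈ S, a ≤ ENNReal.ofReal (exp (-y))) : a ≤ ENNReal.ofReal (exp (-sSup S)) := by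
  by_cases hS : S.Nonempty ∧ BddAbove S
  · obtain ⟨hne, hbdd⟩ := hS
    rw [← ENNReal.ofReal_toReal (ne_top_of_le_ne_top one_ne_top ha)]
    refine ENNReal.ofReal_le_ofReal ?_
    have hexp : Antitone fun y => exp (-y) := fun _ _ hxy => exp_le_exp.2 (neg_le_neg hxy)
    rw [hexp.map_csSup_of_continuousAt (by fun_prop) hne hbdd]
    refine le_csInf (hne.image _) ?_
    rintro _ ⟨y, hy, rfl⟩
    exact ENNReal.toReal_le_of_le_ofReal (exp_pos _).le (h y hy)
  · -- `sSup` of an empty or unbounded set of reals is `0`, and the claim reduces to `a ≤ 1`.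
    have h0 : sSup S = 0 := by
      rcases not_and_or.1 hS with hne | hbdd
      · rw [Set.not_nonempty_iff_eq_empty.1 hne, Real.sSup_empty]
      · exact Real.sSup_of_not_bddAbove hbdd
    simpa [h0] using ha

theorem tail_of_spatial_average_via_GLS_general
    {X Ω : Type*} [MeasurableSpace X] [MeasurableSpace Ω]
    (μ : Measure X) (P : Measure Ω)
    [IsProbabilityMeasure μ] [IsProbabilityMeasure P]
    (ξ : X → Ω → ℝ)
    (hmeas : Measurable fun z : X × Ω => ξ z.1 z.2)
    (Q : ℝ → ℝ≥0∞)
    (hQ : ∀ t : ℝ, Q t = ⨆ x : X, P {ω | t ≤ |ξ x ω|})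
    (g₀ : ℝ → ℝ≥0∞)
    (hg₀ : ∀ p : ℝ, g₀ p =
      (ENNReal.ofReal p *
        ∫⁻ t in Set.Ioi (0 : ℝ), ENNReal.ofReal (t ^ (p - 1)) * Q t) ^ (1 / p))
    (g : ℝ → ℝ)
    (hg : ∀ p : ℝ, g p = p * Real.log (g₀ p).toReal)
    (b : ℝ≥0∞)
    (hfin : ∀ p : ℝ, 1 < p → ENNReal.ofReal p < b → g₀ p < ⊤) :
    ∀ t : ℝ, Real.exp 1 ≤ t →
      P {ω | t ≤ |∫ x, ξ x ω ∂μ|} ≤ ENNReal.ofReal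
        (Real.exp
          (- sSup {y : ℝ | ∃ p : ℝ, 1 < p ∧ ENNReal.ofReal p < b ∧
              y = p * Real.log t - g p})) := by
  intro t ht
  have ht0 : 0 < t := (exp_pos 1).trans_le ht
  refine le_ofReal_exp_neg_sSup prob_le_one ?_
  rintro _ ⟨p, hp, hpb, rfl⟩
  have hp0 : 0 < p := zero_lt_one.trans hp
  rw [hg]
  refine le_ofReal_exp_neg_of_rpow_mul_le (hfin p hp hpb).ne ht0 hp0 ?_
  have htail : {ω | t ≤ |∫ x, ξ x ω ∂μ|} = {ω | ENNReal.ofReal t ≤ ‖∫ x, ξ x ω ∂μ‖ₑ} := by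
    simp only [Real.enorm_eq_ofReal_abs, ENNReal.ofReal_le_ofReal_iff (abs_nonneg _)]
  calc ENNReal.ofReal t ^ p * P {ω | t ≤ |∫ x, ξ x ω ∂μ|}
      ≤ ∫⁻ ω, ‖∫ x, ξ x ω ∂μ‖ₑ ^ p ∂P := htail ▸ rpow_mul_meas_le_enorm_le_lintegral
        hmeas.stronglyMeasurable.integral_prod_left.aestronglyMeasurable hp0.le _
    _ ≤ ∫⁻ x, ∫⁻ ω, ‖ξ x ω‖ₑ ^ p ∂P ∂μ := lintegral_enorm_integral_rpow_le hmeas hp.le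
    _ ≤ ∫⁻ _, (ENNReal.ofReal p *
          ∫⁻ s in Set.Ioi 0, ENNReal.ofReal (s ^ (p - 1)) * Q s) ∂μ := lintegral_mono fun x =>
        lintegral_enorm_rpow_le_of_meas_le (hmeas.comp measurable_prodMk_left).aemeasurable hp0
          fun s => hQ s ▸ le_iSup (fun x => P {ω | s ≤ |ξ x ω|}) x
    _ = g₀ p ^ p := by
        rw [lintegral_const, measure_univ, mul_one, hg₀, ← ENNReal.rpow_mul,
          one_div_mul_cancel hp0.ne', ENNReal.rpow_one]

/-- Theorem 2.1: let `ξ` be a jointly measurable random field with uniform tail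
`Q(t) = sup_x P(|ξ(x)| ≥ t)`, let `g₀(p) = (p ∫₀^∞ t^{p−1} Q(t) dt)^{1/p}` and
`g(p) = p ln g₀(p)`, and suppose `g₀(p) < ∞` for all `p ∈ (1,b)` for some
`b ∈ (1,∞]`. Then the spatial average `ξ[X](ω) = ∫_X ξ(x,ω) μ(dx)` satisfies
`P(|ξ[X]| ≥ t) ≤ exp(−g*(ln t))` for all `t ≥ e`, where
`g*(u) = sup_{p∈(1,b)} (pu − g(p))`. -/
theorem tail_of_spatial_average_via_GLS
    {X Ω : Type*} [MeasurableSpace X] [MeasurableSpace Ω]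
    (μ : Measure X) (P : Measure Ω)
    [IsProbabilityMeasure μ] [IsProbabilityMeasure P]
    (ξ : X → Ω → ℝ)
    (hmeas : Measurable fun z : X × Ω => ξ z.1 z.2)
    (Q : ℝ → ℝ≥0∞)
    (hQ : ∀ t : ℝ, Q t = ⨆ x : X, P {ω | t ≤ |ξ x ω|})
    (g₀ : ℝ → ℝ≥0∞)
    (hg₀ : ∀ p : ℝ, g₀ p =
      (ENNReal.ofReal p *
        ∫⁻ t in Set.Ioi (0 : ℝ), ENNReal.ofReal (t ^ (p - 1)) * Q t) ^ (1 / p))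
    (g : ℝ → ℝ)
    (hg : ∀ p : ℝ, g p = p * Real.log (g₀ p).toReal)
    (b : ℝ≥0∞) (hb : 1 < b)
    (hfin : ∀ p : ℝ, 1 < p → ENNReal.ofReal p < b → g₀ p < ⊤) :
    ∀ t : ℝ, Real.exp 1 ≤ t →
      P {ω | t ≤ |∫ x, ξ x ω ∂μ|} ≤ ENNReal.ofReal
        (Real.exp
          (- sSup {y : ℝ | ∃ p : ℝ, 1 < p ∧ ENNReal.ofReal p < b ∧
              y = p * Real.log t - g p})) :=
  tail_of_spatial_average_via_GLS_general μ P ξ hmeas Q hQ g₀ hg₀ g hg b hfin
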